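/- arXiv:1603.06621 — 3 statements merged into one kernel-verified Lean document; each statement's English description precedes it below -/
import Mathlib

section
/- Let α and β be propositional formulas such that every propositional variable occurring in β also occurs in α. Then the formula α → (∼α → β) is valid in the matrix M_D. -/
inductive PropForm where
  | var : Nat → PropForm
  | neg : PropForm → PropForm
  | imp : PropForm → PropForm → PropForm
  | or  : PropForm → PropForm → PropForm
  | and : PropForm → PropForm → PropForm
  | iff : PropForm → PropForm → PropForm

def fimp : Fin 3 → Fin 3 → Fin 3
  | 0, _ => 1
  | 1, 0 => 0 | 1, 1 => 1 | 1, 2 => 0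
  | 2, 0 => 0 | 2, 1 => 1 | 2, 2 => 2

def fneg : Fin 3 → Fin 3
  | 0 => 1 | 1 => 0 | 2 => 2

def fdisj : Fin 3 → Fin 3 → Fin 3
  | 0, 0 => 0 | 0, 1 => 1 | 0, 2 => 0
  | 1, _ => 1
  | 2, 0 => 0 | 2, 1 => 1 | 2, 2 => 2

def fconj : Fin 3 → Fin 3 → Fin 3
  | 0, _ => 0
  | 1, 0 => 0 | 1, 1 => 1 | 1, 2 => 1
  | 2, 0 => 0 | 2, 1 => 1 | 2, 2 => 2

def fequiv : Fin 3 → Fin 3 → Fin 3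
  | 0, 0 => 1 | 1, 1 => 1 | 2, 2 => 2
  | _, _ => 0

def evalMD (v : Nat → Fin 3) : PropForm → Fin 3
  | .var n => v n
  | .neg φ => fneg (evalMD v φ)
  | .imp φ ψ => fimp (evalMD v φ) (evalMD v ψ)
  | .or φ ψ => fdisj (evalMD v φ) (evalMD v ψ)
  | .and φ ψ => fconj (evalMD v φ) (evalMD v ψ)
  | .iff φ ψ => fequiv (evalMD v φ) (evalMD v ψ)

def varsOf : PropForm → Set Nat
  | .var n => {n}
  | .neg φ => varsOf φ
  | .imp φ ψ => varsOf φ ∪ varsOf ψ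
  | .or φ ψ => varsOf φ ∪ varsOf ψ
  | .and φ ψ => varsOf φ ∪ varsOf ψ
  | .iff φ ψ => varsOf φ ∪ varsOf ψ

def Desig (a : Fin 3) : Prop := a = 1 ∨ a = 2

def ValidMD (φ : PropForm) : Prop := ∀ v : Nat → Fin 3, Desig (evalMD v φ)

def evalBool (w : Nat → Bool) : PropForm → Bool
  | .var n => w n
  | .neg φ => !(evalBool w φ)
  | .imp φ ψ => !(evalBool w φ) || evalBool w ψ
  | .or φ ψ => evalBool w φ || evalBool w ψ
  | .and φ ψ => evalBool w φ && evalBool w ψ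
  | .iff φ ψ => evalBool w φ == evalBool w ψ

def ClassicalTaut (φ : PropForm) : Prop := ∀ w : Nat → Bool, evalBool w φ = true


lemma eval2_vars (φ : PropForm) (v : Nat → Fin 3) (h : evalMD v φ = 2) :
    ∀ n ∈ varsOf φ, v n = 2 := by
  induction φ with
  | var m => intro n hn; simp [varsOf] at hn; subst hn; exact h
  | neg φ ih =>
      have : evalMD v φ = 2 := by
        have := h; simp [evalMD] at this
        revert this; match hφ : evalMD v φ with
        | 0 => decide | 1 => decide | 2 => simp
      exact ih this
  | imp φ ψ ih1 ih2 =>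
      have h2 : evalMD v φ = 2 ∧ evalMD v ψ = 2 := by
        have := h; simp [evalMD] at this
        revert this
        match evalMD v φ, evalMD v ψ with
        | 0,0 => decide | 0,1 => decide | 0,2 => decide
        | 1,0 => decide | 1,1 => decide | 1,2 => decide
        | 2,0 => decide | 2,1 => decide | 2,2 => simp
      intro n hn; rcases hn with hn | hn
      · exact ih1 h2.1 n hn
      · exact ih2 h2.2 n hn
  | or φ ψ ih1 ih2 =>
      have h2 : evalMD v φ = 2 ∧ evalMD v ψ = 2 := by
        have := h; simp [evalMD] at this
        revert this
        match evalMD v φ, evalMD v ψ with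
        | 0,0 => decide | 0,1 => decide | 0,2 => decide
        | 1,0 => decide | 1,1 => decide | 1,2 => decide
        | 2,0 => decide | 2,1 => decide | 2,2 => simp
      intro n hn; rcases hn with hn | hn
      · exact ih1 h2.1 n hn
      · exact ih2 h2.2 n hn
  | and φ ψ ih1 ih2 =>
      have h2 : evalMD v φ = 2 ∧ evalMD v ψ = 2 := by
        have := h; simp [evalMD] at this
        revert this
        match evalMD v φ, evalMD v ψ with
        | 0,0 => decide | 0,1 => decide | 0,2 => decide
        | 1,0 => decide | 1,1 => decide | 1,2 => decide
        | 2,0 => decide | 2,1 => decide | 2,2 => simp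
      intro n hn; rcases hn with hn | hn
      · exact ih1 h2.1 n hn
      · exact ih2 h2.2 n hn
  | iff φ ψ ih1 ih2 =>
      have h2 : evalMD v φ = 2 ∧ evalMD v ψ = 2 := by
        have := h; simp [evalMD] at this
        revert this
        match evalMD v φ, evalMD v ψ with
        | 0,0 => decide | 0,1 => decide | 0,2 => decide
        | 1,0 => decide | 1,1 => decide | 1,2 => decide
        | 2,0 => decide | 2,1 => decide | 2,2 => simp
      intro n hn; rcases hn with hn | hn
      · exact ih1 h2.1 n hn
      · exact ih2 h2.2 n hn

lemma vars2_eval (φ : PropForm) (v : Nat → Fin 3) (h : ∀ n ∈ varsOf φ, v n = 2) :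
    evalMD v φ = 2 := by
  induction φ with
  | var m => exact h m (by simp [varsOf])
  | neg φ ih =>
      simp [evalMD, ih (fun n hn => h n hn), fneg]
  | imp φ ψ ih1 ih2 =>
      have h1 := ih1 (fun n hn => h n (Or.inl hn))
      have h2 := ih2 (fun n hn => h n (Or.inr hn))
      simp [evalMD, h1, h2, fimp]
  | or φ ψ ih1 ih2 =>
      have h1 := ih1 (fun n hn => h n (Or.inl hn))
      have h2 := ih2 (fun n hn => h n (Or.inr hn))
      simp [evalMD, h1, h2, fdisj]
  | and φ ψ ih1 ih2 =>
      have h1 := ih1 (fun n hn => h n (Or.inl hn))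
      have h2 := ih2 (fun n hn => h n (Or.inr hn))
      simp [evalMD, h1, h2, fconj]
  | iff φ ψ ih1 ih2 =>
      have h1 := ih1 (fun n hn => h n (Or.inl hn))
      have h2 := ih2 (fun n hn => h n (Or.inr hn))
      simp [evalMD, h1, h2, fequiv]

theorem stmt8 (α β : PropForm) (h : varsOf β ⊆ varsOf α) :
    ValidMD (PropForm.imp α (PropForm.imp (PropForm.neg α) β)) := by
  intro v
  simp only [evalMD]
  match ha : evalMD v α with
  | 0 => left; rfl
  | 1 =>
      match hb : evalMD v β with
      | 0 => left; rfl | 1 => left; rfl | 2 => left; rfl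
  | 2 =>
      have hb : evalMD v β = 2 :=
        vars2_eval β v (fun n hn => eval2_vars α v ha n (h hn))
      rw [hb]; right; rfl
end

section
/- Let α and β be propositional formulas such that some propositional variable q occurs in β but not in α. Then there exists a valuation v into the matrix M_D under which both α and ∼α take designated values, while β and ∼β do not both take designated values. (This is the semantic core of the atomic inconsistency of the system ⟨R_0∗, T_D⟩: adding a contradiction α, ∼α does not trivialize formulas containing new variables.) -/
lemma eval_all2 (v : Nat → Fin 3) (φ : PropForm) (h : ∀ n ∈ varsOf φ, v n = 2) :
    evalMD v φ = 2 := by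
  induction φ with
  | var n => exact h n rfl
  | neg φ ih => simp [evalMD, ih (fun n hn => h n hn), fneg]
  | imp φ ψ ih1 ih2 =>
      simp [evalMD, ih1 (fun n hn => h n (Or.inl hn)), ih2 (fun n hn => h n (Or.inr hn)), fimp]
  | or φ ψ ih1 ih2 =>
      simp [evalMD, ih1 (fun n hn => h n (Or.inl hn)), ih2 (fun n hn => h n (Or.inr hn)), fdisj]
  | and φ ψ ih1 ih2 =>
      simp [evalMD, ih1 (fun n hn => h n (Or.inl hn)), ih2 (fun n hn => h n (Or.inr hn)), fconj]
  | iff φ ψ ih1 ih2 =>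
      simp [evalMD, ih1 (fun n hn => h n (Or.inl hn)), ih2 (fun n hn => h n (Or.inr hn)), fequiv]

lemma eval_eq2_vars (v : Nat → Fin 3) (φ : PropForm) (h : evalMD v φ = 2) :
    ∀ n ∈ varsOf φ, v n = 2 := by
  induction φ with
  | var m => intro n hn; cases hn; simpa [evalMD] using h
  | neg φ ih =>
      intro n hn
      apply ih _ n hn
      simp only [evalMD] at h
      match hv : evalMD v φ with
      | 0 => rw [hv] at h; simp [fneg] at h
      | 1 => rw [hv] at h; simp [fneg] at h
      | 2 => rfl
  | imp φ ψ ih1 ih2 =>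
      intro n hn
      simp only [evalMD] at h
      have h1 : evalMD v φ = 2 ∧ evalMD v ψ = 2 := by
        match hv : evalMD v φ, hw : evalMD v ψ with
        | 0, _ | 1, 0 | 1, 1 | 1, 2 | 2, 0 | 2, 1 => rw [hv, hw] at h; simp [fimp] at h
        | 2, 2 => exact ⟨rfl, rfl⟩
      rcases hn with hn | hn
      · exact ih1 h1.1 n hn
      · exact ih2 h1.2 n hn
  | or φ ψ ih1 ih2 =>
      intro n hn
      simp only [evalMD] at h
      have h1 : evalMD v φ = 2 ∧ evalMD v ψ = 2 := by
        match hv : evalMD v φ, hw : evalMD v ψ with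
        | 0, 0 | 0, 1 | 0, 2 | 1, 0 | 1, 1 | 1, 2 | 2, 0 | 2, 1 => rw [hv, hw] at h; simp [fdisj] at h
        | 2, 2 => exact ⟨rfl, rfl⟩
      rcases hn with hn | hn
      · exact ih1 h1.1 n hn
      · exact ih2 h1.2 n hn
  | and φ ψ ih1 ih2 =>
      intro n hn
      simp only [evalMD] at h
      have h1 : evalMD v φ = 2 ∧ evalMD v ψ = 2 := by
        match hv : evalMD v φ, hw : evalMD v ψ with
        | 0, 0 | 0, 1 | 0, 2 | 1, 0 | 1, 1 | 1, 2 | 2, 0 | 2, 1 => rw [hv, hw] at h; simp [fconj] at h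
        | 2, 2 => exact ⟨rfl, rfl⟩
      rcases hn with hn | hn
      · exact ih1 h1.1 n hn
      · exact ih2 h1.2 n hn
  | iff φ ψ ih1 ih2 =>
      intro n hn
      simp only [evalMD] at h
      have h1 : evalMD v φ = 2 ∧ evalMD v ψ = 2 := by
        match hv : evalMD v φ, hw : evalMD v ψ with
        | 0, 0 | 0, 1 | 0, 2 | 1, 0 | 1, 1 | 1, 2 | 2, 0 | 2, 1 => rw [hv, hw] at h; simp [fequiv] at h
        | 2, 2 => exact ⟨rfl, rfl⟩
      rcases hn with hn | hn
      · exact ih1 h1.1 n hn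
      · exact ih2 h1.2 n hn

theorem stmt9 (α β : PropForm) (q : Nat) (hq : q ∈ varsOf β) (hq2 : q ∉ varsOf α) :
    ∃ v : Nat → Fin 3, Desig (evalMD v α) ∧ Desig (evalMD v (PropForm.neg α)) ∧
      ¬ (Desig (evalMD v β) ∧ Desig (evalMD v (PropForm.neg β))) := by
  classical
  refine ⟨fun n => if n = q then 0 else 2, ?_, ?_, ?_⟩
  · have : evalMD (fun n => if n = q then 0 else 2) α = 2 := by
      apply eval_all2
      intro n hn
      have : n ≠ q := fun h => hq2 (h ▸ hn)
      simp [this]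
    rw [this]; exact Or.inr rfl
  · have : evalMD (fun n => if n = q then 0 else 2) α = 2 := by
      apply eval_all2
      intro n hn
      have : n ≠ q := fun h => hq2 (h ▸ hn)
      simp [this]
    simp only [evalMD, this]; exact Or.inr rfl
  · rintro ⟨h1, h2⟩
    have hβ : evalMD (fun n => if n = q then 0 else 2) β = 2 := by
      rcases h1 with h1 | h1
      · exfalso
        simp only [evalMD, h1] at h2
        rcases h2 with h2 | h2 <;> simp [fneg] at h2
      · exact h1
    have := eval_eq2_vars _ β hβ q hq
    simp at this
end

section
/- Let α and β be propositional formulas such that every propositional variable occurring in α also occurs in β. Then the restricted conjunction-elimination formula (α ∧ β) → β is valid in the matrix M_D. -/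
lemma vars2 (v : Nat → Fin 3) : ∀ φ : PropForm, evalMD v φ = 2 → ∀ n ∈ varsOf φ, v n = 2 := by
  intro φ
  induction φ with
  | var m => intro h n hn; simp [varsOf] at hn; subst hn; exact h
  | neg φ ih =>
    intro h n hn
    have h2 : evalMD v φ = 2 := by
      have := (by decide : ∀ x : Fin 3, fneg x = 2 → x = 2)
      exact this _ h
    exact ih h2 n hn
  | imp φ ψ ih1 ih2 =>
    intro h n hn
    have h2 := (by decide : ∀ x y : Fin 3, fimp x y = 2 → x = 2 ∧ y = 2) _ _ h
    rcases hn with hn | hn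
    · exact ih1 h2.1 n hn
    · exact ih2 h2.2 n hn
  | or φ ψ ih1 ih2 =>
    intro h n hn
    have h2 := (by decide : ∀ x y : Fin 3, fdisj x y = 2 → x = 2 ∧ y = 2) _ _ h
    rcases hn with hn | hn
    · exact ih1 h2.1 n hn
    · exact ih2 h2.2 n hn
  | and φ ψ ih1 ih2 =>
    intro h n hn
    have h2 := (by decide : ∀ x y : Fin 3, fconj x y = 2 → x = 2 ∧ y = 2) _ _ h
    rcases hn with hn | hn
    · exact ih1 h2.1 n hn
    · exact ih2 h2.2 n hn
  | iff φ ψ ih1 ih2 =>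
    intro h n hn
    have h2 := (by decide : ∀ x y : Fin 3, fequiv x y = 2 → x = 2 ∧ y = 2) _ _ h
    rcases hn with hn | hn
    · exact ih1 h2.1 n hn
    · exact ih2 h2.2 n hn

lemma eval2 (v : Nat → Fin 3) : ∀ φ : PropForm, (∀ n ∈ varsOf φ, v n = 2) → evalMD v φ = 2 := by
  intro φ
  induction φ with
  | var m => intro h; exact h m (by simp [varsOf])
  | neg φ ih =>
    intro h
    have := ih h
    simp [evalMD, this]; rfl
  | imp φ ψ ih1 ih2 =>
    intro h
    have h1 := ih1 fun n hn => h n (Or.inl hn)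
    have h2 := ih2 fun n hn => h n (Or.inr hn)
    simp [evalMD, h1, h2]; rfl
  | or φ ψ ih1 ih2 =>
    intro h
    have h1 := ih1 fun n hn => h n (Or.inl hn)
    have h2 := ih2 fun n hn => h n (Or.inr hn)
    simp [evalMD, h1, h2]; rfl
  | and φ ψ ih1 ih2 =>
    intro h
    have h1 := ih1 fun n hn => h n (Or.inl hn)
    have h2 := ih2 fun n hn => h n (Or.inr hn)
    simp [evalMD, h1, h2]; rfl
  | iff φ ψ ih1 ih2 =>
    intro h
    have h1 := ih1 fun n hn => h n (Or.inl hn)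
    have h2 := ih2 fun n hn => h n (Or.inr hn)
    simp [evalMD, h1, h2]; rfl

theorem stmt16 (α β : PropForm) (h : varsOf α ⊆ varsOf β) :
    ValidMD (PropForm.imp (PropForm.and α β) β) := by
  intro v
  have hb : evalMD v β = 0 ∨ evalMD v β = 1 ∨ evalMD v β = 2 := by
    have := (by decide : ∀ x : Fin 3, x = 0 ∨ x = 1 ∨ x = 2)
    exact this _
  rcases hb with hb | hb | hb
  · have : fconj (evalMD v α) 0 = 0 := by
      have := (by decide : ∀ x : Fin 3, fconj x 0 = 0); exact this _
    simp [Desig, evalMD, hb, this]; left; rfl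
  · have : fimp (fconj (evalMD v α) 1) 1 = 1 := by
      have := (by decide : ∀ x : Fin 3, fimp (fconj x 1) 1 = 1); exact this _
    simp [Desig, evalMD, hb, this]
  · have ha : evalMD v α = 2 := eval2 v α fun n hn => vars2 v β hb n (h hn)
    simp [Desig, evalMD, hb, ha]; right; rfl
end
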